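/- Let t_f > 0, let x : [0,t_f] → ℝ^{n_x} be three times continuously differentiable and u : [0,t_f] → ℝ^{n_u} be twice continuously differentiable, and suppose x'(t) = f(x(t), u(t)) for all t ∈ [0,t_f], where f : ℝ^{n_x} × ℝ^{n_u} → ℝ^{n_x} is Lipschitz continuous. Fix C_t > 0, and for each pair (K,N) with K, N ≥ 1 let 0 = t_0^{(K)} < ... < t_K^{(K)} = t_f be knots with t_k^{(K)} − t_{k−1}^{(K)} ≤ C_t/K, and let x_M and u_M be the componentwise composite Bernstein approximants of x and u with K segments of degree N. Then for every ε > 0 there exist K* and N* such that for all K ≥ K* and N ≥ N*, and for all t ∈ [0,t_f] not equal to a knot, ‖x_M'(t) − f(x_M(t), u_M(t))‖ ≤ ε, where x_M'(t) denotes the derivative of the polynomial piece containing t. -/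

import Mathlib

/-- Bernstein basis polynomial of degree `N`, index `j`, on `[a,b]`:
`b_{j,N}(t) = (N choose j) (t-a)^j (b-t)^(N-j) / (b-a)^N`. -/
noncomputable def bern (a b : ℝ) (N j : ℕ) (t : ℝ) : ℝ :=
  (N.choose j : ℝ) * (t - a) ^ j * (b - t) ^ (N - j) / (b - a) ^ N

/-- The (componentwise) polynomial piece of the composite Bernstein approximant of a
vector-valued function on a segment `[a,b]`: `Σ_{j=0}^N b_{j,N}(t) • x(a + j(b−a)/N)`. -/
noncomputable def bernApproxV {n : ℕ} (x : ℝ → EuclideanSpace ℝ (Fin n))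
    (a b : ℝ) (N : ℕ) (t : ℝ) : EuclideanSpace ℝ (Fin n) :=
  ∑ j ∈ Finset.range (N + 1), bern a b N j t • x (a + (j : ℝ) * (b - a) / (N : ℝ))

/-!
On a segment `[a, b]` of length `h`, the Bernstein approximant is a convex combination of samples
of `x` taken in the segment, so it is within `Lip(x) * h` of `x`. Its derivative is again a convex
combination, now of the difference quotients of `x` over consecutive nodes, and by the mean value
theorem each of these is within `Lip(x') * h` of `x'(t)`. Since `x' = f(x, u)` with `f` Lipschitz,
the dynamics residual is `O(h) = O(C_t / K)`, uniformly in `N ≥ 1`.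
-/

open Finset Set

lemma bern_nonneg {a b t : ℝ} (ht : t ∈ Icc a b) (N j : ℕ) : 0 ≤ bern a b N j t := by
  have hta : 0 ≤ t - a := sub_nonneg.2 ht.1
  have hbt : 0 ≤ b - t := sub_nonneg.2 ht.2
  have hba : 0 ≤ b - a := sub_nonneg.2 (ht.1.trans ht.2)
  unfold bern
  positivity

lemma sum_bern_eq_one {a b : ℝ} (hab : a ≠ b) (N : ℕ) (t : ℝ) :
    ∑ j ∈ range (N + 1), bern a b N j t = 1 := by
  have hba : (b - a) ^ N ≠ 0 := pow_ne_zero _ (sub_ne_zero.2 hab.symm)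
  simp only [bern, ← sum_div, div_eq_one_iff_eq hba]
  rw [← sub_add_sub_cancel b t a, add_comm (b - t), add_pow]
  exact sum_congr rfl fun j _ ↦ by ring

lemma bern_succ_self (a b : ℝ) (N : ℕ) (t : ℝ) : bern a b N (N + 1) t = 0 := by
  simp [bern]

lemma hasDerivAt_bern_succ_zero {a b : ℝ} (hab : a ≠ b) (M : ℕ) (t : ℝ) :
    HasDerivAt (bern a b (M + 1) 0) (-((M + 1) / (b - a) * bern a b M 0 t)) t := by
  have hba : b - a ≠ 0 := sub_ne_zero.2 hab.symm
  have hbern : bern a b (M + 1) 0 = fun s ↦ (b - s) ^ (M + 1) / (b - a) ^ (M + 1) := by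
    ext s; simp [bern]
  rw [hbern]
  refine ((((hasDerivAt_id t).const_sub b).pow (M + 1)).div_const _).congr_deriv ?_
  simp only [bern, id, Nat.choose_zero_right, Nat.add_sub_cancel, Nat.sub_zero]
  field_simp
  push_cast
  ring

lemma hasDerivAt_bern_succ_succ {a b : ℝ} (hab : a ≠ b) (M j : ℕ) (t : ℝ) :
    HasDerivAt (bern a b (M + 1) (j + 1))
      ((M + 1) / (b - a) * (bern a b M j t - bern a b M (j + 1) t)) t := by
  have hba : b - a ≠ 0 := sub_ne_zero.2 hab.symm
  have hl : ((M + 1 : ℕ) : ℝ) * M.choose j = (M + 1).choose (j + 1) * ((j + 1 : ℕ) : ℝ) :=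
    mod_cast Nat.add_one_mul_choose_eq M j
  have hr : (M.choose (j + 1) : ℝ) * ((M + 1 : ℕ) : ℝ)
      = (M + 1).choose (j + 1) * ((M - j : ℕ) : ℝ) := by
    rw [← Nat.add_sub_add_right M 1 j]
    exact_mod_cast Nat.choose_mul_succ_eq M (j + 1)
  have hbern : bern a b (M + 1) (j + 1) = fun s ↦
      (M + 1).choose (j + 1) * ((s - a) ^ (j + 1) * (b - s) ^ (M - j)) / (b - a) ^ (M + 1) := by
    ext s; simp only [bern, Nat.add_sub_add_right]; ring
  rw [hbern]
  refine (((((hasDerivAt_id t).sub_const a).pow (j + 1)).mul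
    (((hasDerivAt_id t).const_sub b).pow (M - j))).const_mul _ |>.div_const _).congr_deriv ?_
  simp only [bern, id, Pi.pow_apply, Nat.add_sub_cancel, Nat.sub_sub]
  field_simp
  push_cast at hl hr ⊢
  linear_combination (b - a) ^ (M + 1) * (-((t - a) ^ j * (b - t) ^ (M - j)) * hl
    + (t - a) ^ (j + 1) * (b - t) ^ (M - (j + 1)) * hr)

section NormedSpace

variable {E : Type*} [NormedAddCommGroup E] [NormedSpace ℝ E]

lemma norm_sum_bern_smul_sub_le {a b t : ℝ} (hab : a < b) (ht : t ∈ Icc a b) {N : ℕ}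
    {y : ℕ → E} {v : E} {C : ℝ} (hy : ∀ j ≤ N, ‖y j - v‖ ≤ C) :
    ‖∑ j ∈ range (N + 1), bern a b N j t • y j - v‖ ≤ C := by
  have hsum := sum_bern_eq_one hab.ne N t
  calc ‖∑ j ∈ range (N + 1), bern a b N j t • y j - v‖
      = ‖∑ j ∈ range (N + 1), bern a b N j t • (y j - v)‖ := by
        simp only [smul_sub, sum_sub_distrib, ← sum_smul, hsum, one_smul]
    _ ≤ ∑ j ∈ range (N + 1), bern a b N j t * C := by
        refine (norm_sum_le _ _).trans (sum_le_sum fun j hj ↦ ?_)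
        rw [norm_smul, Real.norm_of_nonneg (bern_nonneg ht N j)]
        exact mul_le_mul_of_nonneg_left (hy j (Nat.lt_succ_iff.1 (mem_range.1 hj)))
          (bern_nonneg ht N j)
    _ = C := by rw [← sum_mul, hsum, one_mul]

lemma hasDerivAt_sum_bern_smul (y : ℕ → E) {a b : ℝ} (hab : a ≠ b) (M : ℕ) (t : ℝ) :
    HasDerivAt (fun s ↦ ∑ j ∈ range (M + 1 + 1), bern a b (M + 1) j s • y j)
      (∑ j ∈ range (M + 1), bern a b M j t • ((M + 1) / (b - a) : ℝ) • (y (j + 1) - y j))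
      t := by
  have hsplit : (fun s ↦ ∑ j ∈ range (M + 1 + 1), bern a b (M + 1) j s • y j) = fun s ↦
      ∑ j ∈ range (M + 1), bern a b (M + 1) (j + 1) s • y (j + 1)
        + bern a b (M + 1) 0 s • y 0 :=
    funext fun s ↦ sum_range_succ' _ _
  have htel : ∑ j ∈ range (M + 1), bern a b M (j + 1) t • y (j + 1) + bern a b M 0 t • y 0
      = ∑ j ∈ range (M + 1), bern a b M j t • y j := by
    rw [← sum_range_succ' (fun j ↦ bern a b M j t • y j), sum_range_succ, bern_succ_self,
      zero_smul, add_zero]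
  have hfactor :
      ∑ j ∈ range (M + 1), bern a b M j t • ((M + 1) / (b - a) : ℝ) • (y (j + 1) - y j)
      = ((M + 1) / (b - a) : ℝ) • (∑ j ∈ range (M + 1), bern a b M j t • y (j + 1)
        - ∑ j ∈ range (M + 1), bern a b M j t • y j) := by
    simp only [smul_sub, sum_sub_distrib, smul_sum, smul_comm ((M + 1) / (b - a) : ℝ)]
  rw [hsplit]
  refine ((HasDerivAt.fun_sum fun j _ ↦ (hasDerivAt_bern_succ_succ hab M j t).smul_const
    (y (j + 1))).add ((hasDerivAt_bern_succ_zero hab M t).smul_const (y 0))).congr_deriv ?_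
  rw [hfactor, ← htel]
  simp only [smul_add, smul_sub, sub_smul, mul_smul, neg_smul, sum_sub_distrib, smul_sum]
  abel

lemma norm_slope_sub_le {f f' : ℝ → E} {v : E} {C p q : ℝ} (hpq : p < q)
    (hf : ∀ s ∈ Icc p q, HasDerivWithinAt f (f' s) (Icc p q) s)
    (hC : ∀ s ∈ Icc p q, ‖f' s - v‖ ≤ C) :
    ‖slope f p q - v‖ ≤ C := by
  have hg : ∀ s ∈ Icc p q, HasDerivWithinAt (fun s ↦ f s - s • v) (f' s - v) (Icc p q) s :=
    fun s hs ↦ (hf s hs).sub (by simpa using ((hasDerivAt_id s).smul_const v).hasDerivWithinAt)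
  have hmvt := (convex_Icc p q).norm_image_sub_le_of_norm_hasDerivWithin_le hg hC
    (left_mem_Icc.2 hpq.le) (right_mem_Icc.2 hpq.le)
  have hqp : 0 < q - p := sub_pos.2 hpq
  have hslope : slope f p q - v = (q - p)⁻¹ • ((f q - q • v) - (f p - p • v)) := by
    rw [slope_def_module, sub_sub_sub_comm, ← sub_smul, smul_sub _ (f q - f p), smul_smul,
      inv_mul_cancel₀ hqp.ne', one_smul]
  rw [hslope, norm_smul, norm_inv, Real.norm_of_nonneg hqp.le, inv_mul_le_iff₀ hqp]
  rwa [Real.norm_of_nonneg hqp.le, mul_comm] at hmvt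

end NormedSpace

lemma LipschitzOnWith.norm_sub_le_of_mem_Icc {F : Type*} [SeminormedAddCommGroup F]
    {g : ℝ → F} {K : NNReal} {a b s t : ℝ} (hg : LipschitzOnWith K g (Icc a b))
    (hs : s ∈ Icc a b) (ht : t ∈ Icc a b) : ‖g s - g t‖ ≤ K * (b - a) := by
  rw [← dist_eq_norm]
  exact (hg.dist_le_mul s hs t ht).trans
    (mul_le_mul_of_nonneg_left (Real.dist_le_of_mem_Icc hs ht) K.2)

lemma add_mul_div_mem_Icc {a b : ℝ} (hab : a ≤ b) {N j : ℕ} (hj : j ≤ N) :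
    a + j * (b - a) / N ∈ Icc a b := by
  have hba : 0 ≤ b - a := sub_nonneg.2 hab
  have hstep : j * (b - a) / N ≤ b - a :=
    div_le_of_le_mul₀ N.cast_nonneg hba (by rw [mul_comm]; gcongr)
  constructor <;> [skip; linarith]
  have : 0 ≤ j * (b - a) / N := by positivity
  linarith

section Approximant

variable {n : ℕ} {a b t : ℝ}

lemma norm_bernApproxV_sub_le {x : ℝ → EuclideanSpace ℝ (Fin n)} {K : NNReal}
    (hx : LipschitzOnWith K x (Icc a b)) (hab : a < b) (N : ℕ) (ht : t ∈ Icc a b) :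
    ‖bernApproxV x a b N t - x t‖ ≤ K * (b - a) :=
  norm_sum_bern_smul_sub_le hab ht fun _ hj ↦
    hx.norm_sub_le_of_mem_Icc (add_mul_div_mem_Icc hab.le hj) ht

lemma norm_deriv_bernApproxV_sub_le {x x' : ℝ → EuclideanSpace ℝ (Fin n)} {K : NNReal}
    (hxd : ∀ s ∈ Icc a b, HasDerivWithinAt x (x' s) (Icc a b) s)
    (hx' : LipschitzOnWith K x' (Icc a b)) (hab : a < b) {N : ℕ} (hN : 1 ≤ N)
    (ht : t ∈ Icc a b) :
    ‖deriv (bernApproxV x a b N) t - x' t‖ ≤ K * (b - a) := by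
  obtain ⟨M, rfl⟩ := Nat.exists_eq_add_of_le' hN
  set node : ℕ → ℝ := fun j ↦ a + j * (b - a) / ((M + 1 : ℕ) : ℝ)
  have hderiv := hasDerivAt_sum_bern_smul (fun j ↦ x (node j)) hab.ne M t
  have happrox : bernApproxV x a b (M + 1)
      = fun s ↦ ∑ j ∈ range (M + 1 + 1), bern a b (M + 1) j s • x (node j) := rfl
  rw [happrox, hderiv.deriv]
  refine norm_sum_bern_smul_sub_le hab ht fun j hj ↦ ?_
  have hj0 := add_mul_div_mem_Icc hab.le (N := M + 1) (j := j) (by omega)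
  have hj1 := add_mul_div_mem_Icc hab.le (N := M + 1) (j := j + 1) (by omega)
  have hstep : node (j + 1) - node j = (b - a) / (M + 1) := by
    simp only [node]; push_cast; ring
  have hlt : node j < node (j + 1) := sub_pos.1 (hstep ▸ div_pos (sub_pos.2 hab) (by positivity))
  have hsub : Icc (node j) (node (j + 1)) ⊆ Icc a b := Icc_subset_Icc hj0.1 hj1.2
  have hslope : slope x (node j) (node (j + 1))
      = ((M + 1) / (b - a) : ℝ) • (x (node (j + 1)) - x (node j)) := by
    rw [slope_def_module, hstep, inv_div]
  rw [← hslope]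
  exact norm_slope_sub_le hlt (fun s hs ↦ (hxd s (hsub hs)).mono hsub)
    fun s hs ↦ hx'.norm_sub_le_of_mem_Icc (hsub hs) ht

lemma norm_deriv_bernApproxV_sub_dynamics_le {m : ℕ} {x x' : ℝ → EuclideanSpace ℝ (Fin n)}
    {u : ℝ → EuclideanSpace ℝ (Fin m)}
    {f : EuclideanSpace ℝ (Fin n) × EuclideanSpace ℝ (Fin m) → EuclideanSpace ℝ (Fin n)}
    {L Kx Ku Kd : NNReal} (hf : LipschitzWith L f)
    (hxd : ∀ s ∈ Icc a b, HasDerivWithinAt x (x' s) (Icc a b) s)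
    (hx : LipschitzOnWith Kx x (Icc a b)) (hu : LipschitzOnWith Ku u (Icc a b))
    (hx' : LipschitzOnWith Kd x' (Icc a b)) (hab : a < b) {N : ℕ} (hN : 1 ≤ N)
    (ht : t ∈ Icc a b) (hdyn : x' t = f (x t, u t)) :
    ‖deriv (bernApproxV x a b N) t - f (bernApproxV x a b N t, bernApproxV u a b N t)‖
      ≤ (Kd + L * (Kx + Ku)) * (b - a) := by
  have hX := norm_bernApproxV_sub_le hx hab N ht
  have hU := norm_bernApproxV_sub_le hu hab N ht
  have hba : 0 ≤ b - a := sub_nonneg.2 hab.le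
  have hstate : dist (x t, u t) (bernApproxV x a b N t, bernApproxV u a b N t)
      ≤ (Kx + Ku) * (b - a) := by
    rw [Prod.dist_eq, dist_comm (x t), dist_comm (u t), dist_eq_norm, dist_eq_norm]
    refine max_le (hX.trans ?_) (hU.trans ?_) <;> gcongr <;> simp
  have hD := norm_deriv_bernApproxV_sub_le hxd hx' hab hN ht
  rw [hdyn] at hD
  have hF := hf.dist_le_mul (x t, u t) (bernApproxV x a b N t, bernApproxV u a b N t)
  rw [dist_eq_norm] at hF
  calc ‖deriv (bernApproxV x a b N) t - f (bernApproxV x a b N t, bernApproxV u a b N t)‖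
      ≤ ‖deriv (bernApproxV x a b N) t - f (x t, u t)‖
        + ‖f (x t, u t) - f (bernApproxV x a b N t, bernApproxV u a b N t)‖ :=
        norm_sub_le_norm_sub_add_norm_sub _ _ _
    _ ≤ Kd * (b - a) + L * ((Kx + Ku) * (b - a)) :=
        add_le_add hD (hF.trans (mul_le_mul_of_nonneg_left hstate L.2))
    _ = (Kd + L * (Kx + Ku)) * (b - a) := by ring

end Approximant

lemma Icc_knot_subset {T : ℕ → ℝ} {K k : ℕ} (hmono : ∀ m < K, T m < T (m + 1))
    (hk : k < K) :
    Icc (T k) (T (k + 1)) ⊆ Icc (T 0) (T K) := by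
  have hT : MonotoneOn T (Set.Iic K) :=
    (strictMonoOn_Iic_of_lt_succ fun m hm ↦
      by simpa only [Order.succ_eq_add_one] using hmono m hm).monotoneOn
  exact Icc_subset_Icc (hT (mem_Iic.2 K.zero_le) (mem_Iic.2 hk.le) k.zero_le)
    (hT (mem_Iic.2 hk) (mem_Iic.2 le_rfl) hk)

theorem composite_bernstein_feasibility_general
    (nx nu : ℕ) (tf Ct : ℝ) (htf : 0 < tf)
    (x : ℝ → EuclideanSpace ℝ (Fin nx)) (u : ℝ → EuclideanSpace ℝ (Fin nu))
    (f : EuclideanSpace ℝ (Fin nx) × EuclideanSpace ℝ (Fin nu) → EuclideanSpace ℝ (Fin nx))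
    (L : NNReal) (hf : LipschitzWith L f)
    (hx : ContDiffOn ℝ 3 x (Set.Icc 0 tf)) (hu : ContDiffOn ℝ 2 u (Set.Icc 0 tf))
    (hdyn : ∀ t ∈ Set.Icc (0 : ℝ) tf, derivWithin x (Set.Icc 0 tf) t = f (x t, u t))
    (T : ℕ → ℕ → ℝ)
    (hT0 : ∀ K, 1 ≤ K → T K 0 = 0) (hTK : ∀ K, 1 ≤ K → T K K = tf)
    (hmono : ∀ K, 1 ≤ K → ∀ k < K, T K k < T K (k + 1))
    (hsize : ∀ K, 1 ≤ K → ∀ k < K, T K (k + 1) - T K k ≤ Ct / (K : ℝ)) :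
    ∀ ε > (0 : ℝ), ∃ Kstar Nstar : ℕ, 1 ≤ Kstar ∧ 1 ≤ Nstar ∧
      ∀ K N : ℕ, Kstar ≤ K → Nstar ≤ N →
        ∀ k < K, ∀ t ∈ Set.Ioo (T K k) (T K (k + 1)),
          ‖deriv (bernApproxV x (T K k) (T K (k + 1)) N) t
              - f (bernApproxV x (T K k) (T K (k + 1)) N t,
                   bernApproxV u (T K k) (T K (k + 1)) N t)‖ ≤ ε := by
  intro ε hε
  obtain ⟨Kx, hKx⟩ := hx.exists_lipschitzOnWith (by norm_num) (convex_Icc 0 tf) isCompact_Icc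
  obtain ⟨Ku, hKu⟩ := hu.exists_lipschitzOnWith (by norm_num) (convex_Icc 0 tf) isCompact_Icc
  obtain ⟨Kd, hKd⟩ := (hx.derivWithin (uniqueDiffOn_Icc htf) (m := 2) (by norm_num)
    ).exists_lipschitzOnWith (by norm_num) (convex_Icc 0 tf) isCompact_Icc
  set B : ℝ := Kd + L * (Kx + Ku)
  obtain ⟨K₀, hK₀⟩ := Filter.eventually_atTop.1
    ((tendsto_const_div_atTop_nhds_zero_nat (B * Ct)).eventually (ge_mem_nhds hε))
  refine ⟨max 1 K₀, 1, le_max_left _ _, le_rfl, fun K N hK hN k hk t ht ↦ ?_⟩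
  have hK1 : 1 ≤ K := le_of_max_le_left hK
  have hsub : Icc (T K k) (T K (k + 1)) ⊆ Icc 0 tf := by
    simpa only [hT0 K hK1, hTK K hK1] using Icc_knot_subset (hmono K hK1) hk
  have ht' : t ∈ Icc (T K k) (T K (k + 1)) := Ioo_subset_Icc_self ht
  have hxd (s) (hs : s ∈ Icc (T K k) (T K (k + 1))) :
      HasDerivWithinAt x (derivWithin x (Icc 0 tf) s) (Icc (T K k) (T K (k + 1))) s :=
    ((hx.differentiableOn (by norm_num) s (hsub hs)).hasDerivWithinAt).mono hsub
  calc _ ≤ B * (T K (k + 1) - T K k) :=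
        norm_deriv_bernApproxV_sub_dynamics_le hf hxd (hKx.mono hsub) (hKu.mono hsub)
          (hKd.mono hsub) (hmono K hK1 k hk) hN ht' (hdyn t (hsub ht'))
    _ ≤ B * (Ct / K) := by gcongr; exact hsize K hK1 k hk
    _ ≤ ε := by rw [← mul_div_assoc]; exact hK₀ K (le_of_max_le_right hK)

/-- feasibility, Theorem 1: if `x ∈ C³`, `u ∈ C²` satisfy the dynamics
`x' = f(x,u)` on `[0,t_f]` with `f` Lipschitz, then the dynamics residual of the
composite Bernstein approximants can be made uniformly smaller than any `ε > 0`
by taking `K` and `N` large enough, at every non-knot time `t`. -/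
theorem composite_bernstein_feasibility
    (nx nu : ℕ) (tf Ct : ℝ) (htf : 0 < tf) (hCt : 0 < Ct)
    (x : ℝ → EuclideanSpace ℝ (Fin nx)) (u : ℝ → EuclideanSpace ℝ (Fin nu))
    (f : EuclideanSpace ℝ (Fin nx) × EuclideanSpace ℝ (Fin nu) → EuclideanSpace ℝ (Fin nx))
    (L : NNReal) (hf : LipschitzWith L f)
    (hx : ContDiffOn ℝ 3 x (Set.Icc 0 tf)) (hu : ContDiffOn ℝ 2 u (Set.Icc 0 tf))
    (hdyn : ∀ t ∈ Set.Icc (0 : ℝ) tf, derivWithin x (Set.Icc 0 tf) t = f (x t, u t))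
    (T : ℕ → ℕ → ℝ)
    (hT0 : ∀ K, 1 ≤ K → T K 0 = 0) (hTK : ∀ K, 1 ≤ K → T K K = tf)
    (hmono : ∀ K, 1 ≤ K → ∀ k < K, T K k < T K (k + 1))
    (hsize : ∀ K, 1 ≤ K → ∀ k < K, T K (k + 1) - T K k ≤ Ct / (K : ℝ)) :
    ∀ ε > (0 : ℝ), ∃ Kstar Nstar : ℕ, 1 ≤ Kstar ∧ 1 ≤ Nstar ∧
      ∀ K N : ℕ, Kstar ≤ K → Nstar ≤ N →
        ∀ k < K, ∀ t ∈ Set.Ioo (T K k) (T K (k + 1)),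
          ‖deriv (bernApproxV x (T K k) (T K (k + 1)) N) t
              - f (bernApproxV x (T K k) (T K (k + 1)) N t,
                   bernApproxV u (T K k) (T K (k + 1)) N t)‖ ≤ ε :=
  composite_bernstein_feasibility_general nx nu tf Ct htf x u f L hf hx hu hdyn T hT0 hTK hmono
    hsize
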